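/- Combining the BK bound and the circuit-blocking bound: for critical site percolation on the triangular lattice with any lattice spacing δ, the probability that the annulus A(x; r, R) (with δ ≤ r ≤ R ≤ 1) is crossed by k disjoint interface (boundary) curves is at most (r/R)^{φ(k)} with φ(k) = −C·log(1−γ)·k/2, where C > 0 and γ ∈ (0,1) are constants independent of δ, r, R. In particular φ(k) → ∞ as k → ∞. -/

import Mathlib

/-!
The `k` interfaces force `k / 2` disjoint black crossings (and there are none for odd `k`), so
by BK the probability is at most the `k / 2`-th power of the one-crossing probability, which
RSW bounds by `(r / R) ^ (-C log (1 - γ))`. The exponent is positive because `0 < 1 - γ < 1`,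
so it grows linearly in `k`.
-/

open MeasureTheory Filter

lemma ENNReal.ofReal_rpow_pow {x : ℝ} (hx : 0 ≤ x) (a : ℝ) (m : ℕ) :
    ENNReal.ofReal (x ^ a) ^ m = ENNReal.ofReal (x ^ (a * m)) := by
  rw [← ENNReal.ofReal_pow (Real.rpow_nonneg hx a), Real.rpow_mul_natCast hx]

lemma measure_le_ofReal_rpow_of_bk {Ω : Type*} [MeasurableSpace Ω] {μ : Measure Ω}
    {F : ℕ → Set Ω} (hBK : ∀ m, μ (F m) ≤ μ (F 1) ^ m) {x a : ℝ} (hx : 0 ≤ x)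
    (hF₁ : μ (F 1) ≤ ENNReal.ofReal (x ^ a)) (m : ℕ) :
    μ (F m) ≤ ENNReal.ofReal (x ^ (a * m)) :=
  calc μ (F m) ≤ μ (F 1) ^ m := hBK m
    _ ≤ ENNReal.ofReal (x ^ a) ^ m := pow_le_pow_left' hF₁ m
    _ = ENNReal.ofReal (x ^ (a * m)) := ENNReal.ofReal_rpow_pow hx a m

lemma measure_le_ofReal_rpow_half_of_even_reduction {Ω : Type*} [MeasurableSpace Ω]
    {μ : Measure Ω} {E F : ℕ → Set Ω} (hodd : ∀ k, ¬ Even k → E k = ∅)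
    (hsub : ∀ m, E (2 * m) ⊆ F m) {x a : ℝ}
    (hF : ∀ m, μ (F m) ≤ ENNReal.ofReal (x ^ (a * m))) (k : ℕ) :
    μ (E k) ≤ ENNReal.ofReal (x ^ (a * k / 2)) := by
  rcases Nat.even_or_odd' k with ⟨m, rfl | rfl⟩
  · calc μ (E (2 * m)) ≤ μ (F m) := measure_mono (hsub m)
      _ ≤ ENNReal.ofReal (x ^ (a * m)) := hF m
      _ = ENNReal.ofReal (x ^ (a * ↑(2 * m) / 2)) := by push_cast; ring_nf
  · rw [hodd _ (Nat.not_even_two_mul_add_one m), measure_empty]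
    exact zero_le

lemma neg_mul_log_one_sub_pos {C γ : ℝ} (hC : 0 < C) (hγ0 : 0 < γ) (hγ1 : γ < 1) :
    0 < -C * Real.log (1 - γ) := by
  have : Real.log (1 - γ) < 0 := Real.log_neg (by linarith) (by linarith)
  nlinarith

theorem interface_crossings_powerlaw_bound_general
    {Ω : Type*} [MeasurableSpace Ω] (μ : Measure Ω)
    (r R : ℝ) (hr : 0 < r) (hrR : r ≤ R)
    (IfaceCross BlackCross : ℕ → Set Ω)
    (C γ : ℝ) (hC : 0 < C) (hγ0 : 0 < γ) (hγ1 : γ < 1)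
    (hparity : ∀ k, ¬ Even k → IfaceCross k = ∅)
    (hsub : ∀ m, IfaceCross (2 * m) ⊆ BlackCross m)
    (hBK : ∀ m, μ (BlackCross m) ≤ μ (BlackCross 1) ^ m)
    (hRSW : μ (BlackCross 1) ≤ ENNReal.ofReal ((r / R) ^ (-C * Real.log (1 - γ)))) :
    (∀ k, μ (IfaceCross k) ≤
        ENNReal.ofReal ((r / R) ^ (-C * Real.log (1 - γ) * k / 2))) ∧
      Tendsto (fun k : ℕ => -C * Real.log (1 - γ) * k / 2) atTop atTop := by
  have hratio : 0 ≤ r / R := div_nonneg hr.le (hr.trans_le hrR).le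
  exact ⟨measure_le_ofReal_rpow_half_of_even_reduction hparity hsub
      (measure_le_ofReal_rpow_of_bk hBK hratio hRSW),
    (tendsto_natCast_atTop_atTop.const_mul_atTop
      (neg_mul_log_one_sub_pos hC hγ0 hγ1)).atTop_div_const two_pos⟩

/-- Aizenman–Burchard bound for percolation interfaces: combining
the parity/black-path reduction, the BK inequality and the RSW circuit bound.
For (near-)critical site percolation, the probability that the annulus
`A(x; r, R)` (with `δ ≤ r ≤ R ≤ 1`) is crossed by `k` disjoint interface
curves is at most `(r/R) ^ φ k` with `φ k = -C * log (1-γ) * k / 2`, where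
`C > 0` and `γ ∈ (0,1)` do not depend on `δ, r, R`; in particular
`φ k → ∞` as `k → ∞`.

Hypotheses: `IfaceCross k` is the event that the annulus is crossed by `k`
disjoint boundary (interface) curves — it is void for odd `k` and forces `k/2`
disjoint black crossings; `BlackCross m` is the event of `m` disjoint black
crossings, satisfying the BK bound; `BlackCross 1` satisfies the RSW-type
circuit-blocking bound. -/
theorem interface_crossings_powerlaw_bound
    {Ω : Type*} [MeasurableSpace Ω] (μ : Measure Ω) [IsProbabilityMeasure μ]
    (r R : ℝ) (hr : 0 < r) (hrR : r ≤ R) (hR : R ≤ 1)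
    (IfaceCross BlackCross : ℕ → Set Ω)
    (C γ : ℝ) (hC : 0 < C) (hγ0 : 0 < γ) (hγ1 : γ < 1)
    (hparity : ∀ k, ¬ Even k → IfaceCross k = ∅)
    (hsub : ∀ m, IfaceCross (2 * m) ⊆ BlackCross m)
    (hBK : ∀ m, μ (BlackCross m) ≤ μ (BlackCross 1) ^ m)
    (hRSW : μ (BlackCross 1) ≤ ENNReal.ofReal ((r / R) ^ (-C * Real.log (1 - γ)))) :
    (∀ k, μ (IfaceCross k) ≤
        ENNReal.ofReal ((r / R) ^ (-C * Real.log (1 - γ) * k / 2))) ∧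
      Tendsto (fun k : ℕ => -C * Real.log (1 - γ) * k / 2) atTop atTop :=
  interface_crossings_powerlaw_bound_general μ r R hr hrR IfaceCross BlackCross C γ hC hγ0 hγ1
    hparity hsub hBK hRSW
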